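/- Let Ω ⊆ ℝ³ be open, let ξ : Ω → ℝ³ be a smooth vector field with ξ × curl ξ = 0 and |ξ| = 1 at every point of Ω, and let α : Ω → ℝ be smooth with ∇α·ξ = 0 on Ω. Then the vector field w = α·ξ satisfies w × curl w = (1/2)·∇(|w|²) on Ω and |w| = |α|. If in addition div ξ = 0 on Ω, then div w = 0 on Ω. -/

import Mathlib

noncomputable section

/-- Points of `ℝ³`. -/
abbrev V3 : Type := Fin 3 → ℝ

/-- Standard basis vector. -/
def ee (i : Fin 3) : V3 := fun j => if j = i then 1 else 0

/-- Partial derivative in the `i`-th coordinate direction. -/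
def pd (i : Fin 3) (f : V3 → ℝ) (x : V3) : ℝ := fderiv ℝ f x (ee i)

/-- Gradient of a scalar field. -/
def grad (f : V3 → ℝ) (x : V3) : V3 := fun i => pd i f x

/-- Divergence of a vector field. -/
def vdiv (w : V3 → V3) (x : V3) : ℝ :=
  pd 0 (fun y => w y 0) x + pd 1 (fun y => w y 1) x + pd 2 (fun y => w y 2) x

/-- Curl of a vector field. -/
def vcurl (w : V3 → V3) (x : V3) : V3 :=
  ![pd 1 (fun y => w y 2) x - pd 2 (fun y => w y 1) x,
    pd 2 (fun y => w y 0) x - pd 0 (fun y => w y 2) x,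
    pd 0 (fun y => w y 1) x - pd 1 (fun y => w y 0) x]

/-- Euclidean dot product on `ℝ³`. -/
def dot3 (a b : V3) : ℝ := a 0 * b 0 + a 1 * b 1 + a 2 * b 2

/-- Cross product on `ℝ³`. -/
def cross3 (a b : V3) : V3 :=
  ![a 1 * b 2 - a 2 * b 1, a 2 * b 0 - a 0 * b 2, a 0 * b 1 - a 1 * b 0]

/-- Euclidean norm on `ℝ³`. -/
def norm3 (a : V3) : ℝ := Real.sqrt (dot3 a a)

/-- Laplacian of a scalar field. -/
def lap (f : V3 → ℝ) (x : V3) : ℝ := vdiv (grad f) x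

/-- A smooth orthogonal coordinate system on `Ω`: three smooth scalar functions whose
gradients are nonvanishing and pairwise orthogonal at every point of `Ω`. -/
def OrthoSystem (Ω : Set V3) (f g h : V3 → ℝ) : Prop :=
  ContDiffOn ℝ (⊤ : ℕ∞) f Ω ∧ ContDiffOn ℝ (⊤ : ℕ∞) g Ω ∧ ContDiffOn ℝ (⊤ : ℕ∞) h Ω ∧
    ∀ x ∈ Ω, grad f x ≠ 0 ∧ grad g x ≠ 0 ∧ grad h x ≠ 0 ∧
      dot3 (grad f x) (grad g x) = 0 ∧ dot3 (grad f x) (grad h x) = 0 ∧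
      dot3 (grad g x) (grad h x) = 0

lemma pd_mul (f g : V3 → ℝ) (x : V3) (i : Fin 3) (hf : DifferentiableAt ℝ f x)
    (hg : DifferentiableAt ℝ g x) :
    pd i (fun y => f y * g y) x = f x * pd i g x + pd i f x * g x := by
  unfold pd
  rw [fderiv_fun_mul hf hg]
  simp
  ring

/-- If `ξ` is a unit-norm smooth force-free field (`ξ × curl ξ = 0`, `|ξ| = 1`)
on an open `Ω` and `α` is smooth with `∇α·ξ = 0`, then `w = α·ξ` solves
`w × curl w = (1/2)·∇(|w|²)` with `|w| = |α|`; if moreover `div ξ = 0` then `div w = 0`. -/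
theorem stmt8 (Ω : Set V3) (hΩ : IsOpen Ω)
    (ξ : V3 → V3) (hξs : ContDiffOn ℝ (⊤ : ℕ∞) ξ Ω)
    (hff : ∀ x ∈ Ω, cross3 (ξ x) (vcurl ξ x) = 0)
    (hunit : ∀ x ∈ Ω, norm3 (ξ x) = 1)
    (α : V3 → ℝ) (hα : ContDiffOn ℝ (⊤ : ℕ∞) α Ω)
    (hperp : ∀ x ∈ Ω, dot3 (grad α x) (ξ x) = 0)
    (w : V3 → V3) (hw : w = fun x => α x • ξ x) :
    (∀ x ∈ Ω, cross3 (w x) (vcurl w x) = (1 / 2 : ℝ) • grad (fun y => dot3 (w y) (w y)) x ∧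
      norm3 (w x) = |α x|) ∧
    ((∀ x ∈ Ω, vdiv ξ x = 0) → ∀ x ∈ Ω, vdiv w x = 0) := by
  subst hw
  -- dot3 ξ ξ = 1 on Ω
  have hdotΩ : ∀ y ∈ Ω, dot3 (ξ y) (ξ y) = 1 := by
    intro y hy
    have h := hunit y hy
    unfold norm3 at h
    have hnn : 0 ≤ dot3 (ξ y) (ξ y) := by
      unfold dot3; nlinarith [sq_nonneg (ξ y 0), sq_nonneg (ξ y 1), sq_nonneg (ξ y 2)]
    nlinarith [Real.sq_sqrt hnn]
  -- differentiability and product-rule facts at points of Ω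
  have hαd : ∀ x ∈ Ω, DifferentiableAt ℝ α x := fun x hx =>
    (hα.contDiffAt (hΩ.mem_nhds hx)).differentiableAt (by simp)
  have hξdj : ∀ x ∈ Ω, ∀ j, DifferentiableAt ℝ (fun y => ξ y j) x := by
    intro x hx j
    exact (differentiableAt_pi.mp ((hξs.contDiffAt (hΩ.mem_nhds hx)).differentiableAt (by simp))) j
  have hDw : ∀ x ∈ Ω, ∀ i j, pd i (fun y => α y * ξ y j) x
      = α x * pd i (fun y => ξ y j) x + pd i α x * ξ x j := by
    intro x hx i j
    rw [pd_mul _ _ _ _ (hαd x hx) (hξdj x hx j)]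
  constructor
  · intro x hx
    have hpddot : ∀ i, pd i (fun y => dot3 (α y • ξ y) (α y • ξ y)) x
        = 2 * α x * pd i α x := by
      intro i
      have hev : (fun y => dot3 (α y • ξ y) (α y • ξ y)) =ᶠ[nhds x] (fun y => α y * α y) := by
        filter_upwards [hΩ.mem_nhds hx] with y hy
        have h1 := hdotΩ y hy
        unfold dot3 at h1 ⊢
        simp only [Pi.smul_apply, smul_eq_mul]
        nlinarith [h1]
      unfold pd
      rw [hev.fderiv_eq, fderiv_fun_mul (hαd x hx) (hαd x hx)]
      simp
      ring
    have hf0 := congrFun (hff x hx) 0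
    have hf1 := congrFun (hff x hx) 1
    have hf2 := congrFun (hff x hx) 2
    simp only [cross3, vcurl, Matrix.cons_val_zero, Matrix.cons_val_one, Matrix.head_cons,
      Matrix.cons_val_two, Matrix.tail_cons, Pi.zero_apply] at hf0 hf1 hf2
    have hp := hperp x hx
    simp only [dot3, grad] at hp
    have hd1 := hdotΩ x hx
    unfold dot3 at hd1
    refine ⟨?_, ?_⟩
    · have g0 : cross3 (α x • ξ x) (vcurl (fun y => α y • ξ y) x) 0
          = ((1 / 2 : ℝ) • grad (fun y => dot3 (α y • ξ y) (α y • ξ y)) x) 0 := by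
        simp only [cross3, vcurl, grad, Pi.smul_apply, smul_eq_mul,
          Matrix.cons_val_zero, Matrix.cons_val_one, Matrix.head_cons,
          Matrix.cons_val_two, Matrix.tail_cons, hDw x hx, hpddot]
        linear_combination (α x)^2 * hf0 + α x * pd 0 α x * hd1 - α x * ξ x 0 * hp
      have g1 : cross3 (α x • ξ x) (vcurl (fun y => α y • ξ y) x) 1
          = ((1 / 2 : ℝ) • grad (fun y => dot3 (α y • ξ y) (α y • ξ y)) x) 1 := by
        simp only [cross3, vcurl, grad, Pi.smul_apply, smul_eq_mul,
          Matrix.cons_val_zero, Matrix.cons_val_one, Matrix.head_cons,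
          Matrix.cons_val_two, Matrix.tail_cons, hDw x hx, hpddot]
        linear_combination (α x)^2 * hf1 + α x * pd 1 α x * hd1 - α x * ξ x 1 * hp
      have g2 : cross3 (α x • ξ x) (vcurl (fun y => α y • ξ y) x) 2
          = ((1 / 2 : ℝ) • grad (fun y => dot3 (α y • ξ y) (α y • ξ y)) x) 2 := by
        simp only [cross3, vcurl, grad, Pi.smul_apply, smul_eq_mul,
          Matrix.cons_val_zero, Matrix.cons_val_one, Matrix.head_cons,
          Matrix.cons_val_two, Matrix.tail_cons, hDw x hx, hpddot]
        linear_combination (α x)^2 * hf2 + α x * pd 2 α x * hd1 - α x * ξ x 2 * hp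
      funext i
      fin_cases i
      · exact g0
      · exact g1
      · exact g2
    · unfold norm3
      have h2 : dot3 (α x • ξ x) (α x • ξ x) = (α x) ^ 2 := by
        unfold dot3
        simp only [Pi.smul_apply, smul_eq_mul]
        nlinarith [hd1]
      rw [h2, Real.sqrt_sq_eq_abs]
  · intro hdiv x hx
    have hd := hdiv x hx
    have hp := hperp x hx
    simp only [dot3, grad] at hp
    unfold vdiv at hd ⊢
    simp only [Pi.smul_apply, smul_eq_mul]
    rw [hDw x hx 0 0, hDw x hx 1 1, hDw x hx 2 2]
    linear_combination α x * hd + hp
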